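/- arXiv:0901.2629 — 5 statements merged into one kernel-verified Lean document; each statement's English description precedes it below -/
import Mathlib

section
/- Let C be a cone in R^{7n} closed under non-negative linear combinations, such that every x in C has all 'quadrilateral' coordinates non-negative (coordinates in a distinguished index set Q). Let A(S) denote the subset of a set S consisting of vectors satisfying the quadrilateral constraints, i.e., for each of the n tetrahedra, at most one of its three quadrilateral coordinates is non-zero. If B is a basis for C, then A(B) is a basis for A(C). -/
/-- `x` is a non-negative linear combination of elements of `B`. -/
def IsNonnegCombo {d : ℕ} (B : Set (Fin d → ℝ)) (x : Fin d → ℝ) : Prop :=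
  ∃ (s : Finset (Fin d → ℝ)) (c : (Fin d → ℝ) → ℝ),
    ↑s ⊆ B ∧ (∀ v ∈ s, 0 ≤ c v) ∧ x = ∑ v ∈ s, c v • v

/-- `B` is a basis for `S`. -/
def IsBasisFor {d : ℕ} (B S : Set (Fin d → ℝ)) : Prop :=
  B ⊆ S ∧ (∀ x ∈ S, IsNonnegCombo B x) ∧ ∀ b ∈ B, ¬ IsNonnegCombo (B \ {b}) b

/-
Write a constrained vector `x ∈ C` as a combination of basis vectors with strictly positive
coefficients. Since every basis vector is non-negative on the quadrilateral coordinates, no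
cancellation can happen there: each summand is non-zero only on quadrilateral coordinates where
`x` is non-zero, so it satisfies the quadrilateral constraints as well. Hence the constrained basis
vectors span the constrained part of `C`, and minimality is inherited from `B`.
-/

open Finset

variable {d : ℕ}

theorem IsNonnegCombo.mono {B B' : Set (Fin d → ℝ)} (hBB' : B ⊆ B') {x : Fin d → ℝ}
    (hx : IsNonnegCombo B x) : IsNonnegCombo B' x := by
  obtain ⟨s, c, hs, hc, rfl⟩ := hx
  exact ⟨s, c, hs.trans hBB', hc, rfl⟩

theorem IsNonnegCombo.exists_pos {B : Set (Fin d → ℝ)} {x : Fin d → ℝ}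
    (hx : IsNonnegCombo B x) :
    ∃ (s : Finset (Fin d → ℝ)) (c : (Fin d → ℝ) → ℝ),
      ↑s ⊆ B ∧ (∀ v ∈ s, 0 < c v) ∧ x = ∑ v ∈ s, c v • v := by
  obtain ⟨s, c, hs, hc, rfl⟩ := hx
  refine ⟨s.filter (c · ≠ 0), c, (coe_subset.2 (filter_subset _ s)).trans hs,
    fun v hv => (hc v (mem_filter.1 hv).1).lt_of_ne' (mem_filter.1 hv).2, ?_⟩
  exact (sum_filter_of_ne fun v _ hv => by contrapose! hv; simp [hv]).symm

theorem IsBasisFor.sep {B S : Set (Fin d → ℝ)} (hB : IsBasisFor B S)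
    {P : (Fin d → ℝ) → Prop}
    (hP : ∀ (s : Finset (Fin d → ℝ)) (c : (Fin d → ℝ) → ℝ), ↑s ⊆ B → (∀ v ∈ s, 0 < c v) →
      P (∑ v ∈ s, c v • v) → ∀ v ∈ s, P v) :
    IsBasisFor {b ∈ B | P b} {x ∈ S | P x} := by
  obtain ⟨hBS, hspan, hmin⟩ := hB
  refine ⟨fun b hb => ⟨hBS hb.1, hb.2⟩, ?_, ?_⟩
  · rintro x ⟨hxS, hPx⟩
    obtain ⟨s, c, hs, hc, rfl⟩ := (hspan x hxS).exists_pos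
    exact ⟨s, c, fun v hv => ⟨hs hv, hP s c hs hc hPx v hv⟩, fun v hv => (hc v hv).le, rfl⟩
  · exact fun b hb hcombo =>
      hmin b hb.1 (hcombo.mono (Set.sdiff_subset_sdiff_left (Set.sep_subset _ _)))

theorem sum_smul_apply_ne_zero_of_mem {s : Finset (Fin d → ℝ)} {c : (Fin d → ℝ) → ℝ}
    {p : Fin d} (hc : ∀ v ∈ s, 0 < c v) (hs : ∀ v ∈ s, 0 ≤ v p) {v : Fin d → ℝ} (hv : v ∈ s)
    (hvp : v p ≠ 0) : (∑ w ∈ s, c w • w) p ≠ 0 := by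
  have hterm : 0 < c v * v p := mul_pos (hc v hv) ((hs v hv).lt_of_ne' hvp)
  have hle : c v * v p ≤ (∑ w ∈ s, c w • w) p := by
    simp only [Finset.sum_apply, Pi.smul_apply, smul_eq_mul]
    exact single_le_sum (fun w hw => mul_nonneg (hc w hw).le (hs w hw)) hv
  exact (hterm.trans_le hle).ne'

def SatisfiesQuadConstraints {ι κ : Type*} (quad : ι → κ → Fin d) (x : Fin d → ℝ) : Prop :=
  ∀ i j k, x (quad i j) ≠ 0 → x (quad i k) ≠ 0 → j = k

theorem satisfiesQuadConstraints_of_mem {ι κ : Type*} {quad : ι → κ → Fin d}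
    {s : Finset (Fin d → ℝ)} {c : (Fin d → ℝ) → ℝ} (hc : ∀ v ∈ s, 0 < c v)
    (hs : ∀ v ∈ s, ∀ i j, 0 ≤ v (quad i j))
    (hsum : SatisfiesQuadConstraints quad (∑ v ∈ s, c v • v)) {v : Fin d → ℝ} (hv : v ∈ s) :
    SatisfiesQuadConstraints quad v := fun i j k hj hk =>
  hsum i j k (sum_smul_apply_ne_zero_of_mem hc (fun w hw => hs w hw i j) hv hj)
    (sum_smul_apply_ne_zero_of_mem hc (fun w hw => hs w hw i k) hv hk)

theorem stmt4_general {n : ℕ} (quad : Fin n → Fin 3 → Fin (7*n))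
    (C : Set (Fin (7*n) → ℝ))
    -- every x in C has non-negative quadrilateral coordinates
    (hquadnonneg : ∀ x ∈ C, ∀ i j, 0 ≤ x (quad i j))
    (B : Set (Fin (7*n) → ℝ)) (hB : IsBasisFor B C) :
    IsBasisFor {b ∈ B | ∀ i j k, b (quad i j) ≠ 0 → b (quad i k) ≠ 0 → j = k}
      {x ∈ C | ∀ i j k, x (quad i j) ≠ 0 → x (quad i k) ≠ 0 → j = k} :=
  hB.sep (P := SatisfiesQuadConstraints quad) fun _ _ hsB hc hsum _ hv =>
    satisfiesQuadConstraints_of_mem hc (fun w hw => hquadnonneg w (hB.1 (hsB hw))) hsum hv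

theorem stmt4 {n : ℕ} (quad : Fin n → Fin 3 → Fin (7*n))
    (C : Set (Fin (7*n) → ℝ))
    -- C is closed under non-negative linear combinations
    (hcone : ∀ x ∈ C, ∀ y ∈ C, ∀ a b2 : ℝ, 0 ≤ a → 0 ≤ b2 → a • x + b2 • y ∈ C)
    -- every x in C has non-negative quadrilateral coordinates
    (hquadnonneg : ∀ x ∈ C, ∀ i j, 0 ≤ x (quad i j))
    (B : Set (Fin (7*n) → ℝ)) (hB : IsBasisFor B C) :
    IsBasisFor {b ∈ B | ∀ i j k, b (quad i j) ≠ 0 → b (quad i k) ≠ 0 → j = k}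
      {x ∈ C | ∀ i j k, x (quad i j) ≠ 0 → x (quad i k) ≠ 0 → j = k} :=
  stmt4_general quad C hquadnonneg B hB
end

section
/- Let C be a convex cone in R^d generated by non-negative linear combinations of a finite set B, where B satisfies: no element is a non-negative combination of the others, and all elements of B lie strictly on one side of some hyperplane through 0. Suppose b_r, b_s ∈ B are such that whenever μ b_r + η b_s = sum_i λ_i b_i with μ, η, λ_i ≥ 0, we must have λ_i = 0 for all i ≠ r, s. Then the set F = {μ b_r + η b_s : μ, η ≥ 0} is a face of C in the following sense: F is convex, and whenever an open segment (x, y) with x, y ∈ C contains a point of F, the whole closed segment [x, y] lies in F. -/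
/-!
The set `F` is the cone spanned by `b r` and `b s`, which is convex. If an interior point of the
segment `[x, y]` with `x = ∑ cᵢ bᵢ`, `y = ∑ eᵢ bᵢ` lies in `F`, then it equals
`∑ (p cᵢ + q eᵢ) bᵢ` with `p, q > 0`, so the adjacency hypothesis forces `p cᵢ + q eᵢ = 0`, hence
`cᵢ = eᵢ = 0`, for every `i ∉ {r, s}`. Thus `x, y ∈ F`, and convexity gives `[x, y] ⊆ F`.
-/

open Finset

section PairCone

variable {𝕜 E : Type*}

def pairCone [Semiring 𝕜] [PartialOrder 𝕜] [AddCommMonoid E] [Module 𝕜 E] (u v : E) : Set E :=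
  {x | ∃ μ η : 𝕜, 0 ≤ μ ∧ 0 ≤ η ∧ x = μ • u + η • v}

theorem convex_pairCone [Field 𝕜] [LinearOrder 𝕜] [IsStrictOrderedRing 𝕜] [AddCommGroup E]
    [Module 𝕜 E] (u v : E) : Convex 𝕜 (pairCone (𝕜 := 𝕜) u v) := by
  rintro _ ⟨μ₁, η₁, hμ₁, hη₁, rfl⟩ _ ⟨μ₂, η₂, hμ₂, hη₂, rfl⟩ p q hp hq -
  refine ⟨p * μ₁ + q * μ₂, p * η₁ + q * η₂, by positivity, by positivity, ?_⟩
  simp only [smul_add, smul_smul, add_smul]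
  abel

theorem sum_smul_mem_pairCone [Semiring 𝕜] [PartialOrder 𝕜] [AddCommMonoid E] [Module 𝕜 E]
    {ι : Type*} [Fintype ι] [DecidableEq ι] (b : ι → E) {r s : ι} {c : ι → 𝕜}
    (hc : ∀ i, 0 ≤ c i) (hrs : ∀ i, i ≠ r → i ≠ s → c i = 0) :
    ∑ i, c i • b i ∈ pairCone (𝕜 := 𝕜) (b r) (b s) := by
  have hsupp : ∀ i ∉ ({r, s} : Finset ι), c i • b i = 0 := fun i hi => by
    simp only [mem_insert, mem_singleton, not_or] at hi
    rw [hrs i hi.1 hi.2, zero_smul]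
  rw [← sum_subset (subset_univ _) fun i _ hi => hsupp i hi]
  by_cases h : r = s
  · subst h
    exact ⟨c r, 0, hc r, le_rfl, by simp⟩
  · exact ⟨c r, c s, hc r, hc s, sum_pair h⟩

end PairCone

theorem stmt6_general {d k : ℕ} (b : Fin k → (Fin d → ℝ))
    (r s : Fin k)
    (hadj : ∀ (μ η : ℝ) (lam : Fin k → ℝ), 0 ≤ μ → 0 ≤ η → (∀ i, 0 ≤ lam i) →
      μ • b r + η • b s = ∑ i, lam i • b i → ∀ i, i ≠ r → i ≠ s → lam i = 0) :
    let C : Set (Fin d → ℝ) :=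
      {x | ∃ c : Fin k → ℝ, (∀ i, 0 ≤ c i) ∧ x = ∑ i, c i • b i}
    let F : Set (Fin d → ℝ) :=
      {x | ∃ μ η : ℝ, 0 ≤ μ ∧ 0 ≤ η ∧ x = μ • b r + η • b s}
    Convex ℝ F ∧
      ∀ x ∈ C, ∀ y ∈ C, ∀ z ∈ openSegment ℝ x y, z ∈ F → segment ℝ x y ⊆ F := by
  intro C F
  refine ⟨convex_pairCone (b r) (b s), ?_⟩
  rintro _ ⟨c, hc, rfl⟩ _ ⟨e, he, rfl⟩ _ ⟨p, q, hp, hq, -, rfl⟩ ⟨μ, η, hμ, hη, hz⟩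
  have hcomb : μ • b r + η • b s = ∑ i, (p * c i + q * e i) • b i := by
    simp only [← hz, smul_sum, smul_smul, add_smul, sum_add_distrib]
  have hvanish : ∀ i, i ≠ r → i ≠ s → p * c i = 0 ∧ q * e i = 0 := fun i hir his =>
    (add_eq_zero_iff_of_nonneg (mul_nonneg hp.le (hc i)) (mul_nonneg hq.le (he i))).1 <|
      hadj μ η _ hμ hη (fun i => by have := hc i; have := he i; positivity) hcomb i hir his
  have hx : ∑ i, c i • b i ∈ F := sum_smul_mem_pairCone b hc fun i hir his =>
    (mul_eq_zero.1 (hvanish i hir his).1).resolve_left hp.ne'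
  have hy : ∑ i, e i • b i ∈ F := sum_smul_mem_pairCone b he fun i hir his =>
    (mul_eq_zero.1 (hvanish i hir his).2).resolve_left hq.ne'
  exact (convex_pairCone (b r) (b s)).segment_subset hx hy

theorem stmt6 {d k : ℕ} (b : Fin k → (Fin d → ℝ))
    (hindep : ∀ r : Fin k, ¬ ∃ c : Fin k → ℝ,
      (∀ i, 0 ≤ c i) ∧ c r = 0 ∧ b r = ∑ i, c i • b i)
    (hpos : ∃ h : (Fin d → ℝ) →ₗ[ℝ] ℝ, ∀ i, 0 < h (b i))
    (r s : Fin k)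
    (hadj : ∀ (μ η : ℝ) (lam : Fin k → ℝ), 0 ≤ μ → 0 ≤ η → (∀ i, 0 ≤ lam i) →
      μ • b r + η • b s = ∑ i, lam i • b i → ∀ i, i ≠ r → i ≠ s → lam i = 0) :
    let C : Set (Fin d → ℝ) :=
      {x | ∃ c : Fin k → ℝ, (∀ i, 0 ≤ c i) ∧ x = ∑ i, c i • b i}
    let F : Set (Fin d → ℝ) :=
      {x | ∃ μ η : ℝ, 0 ≤ μ ∧ 0 ≤ η ∧ x = μ • b r + η • b s}
    Convex ℝ F ∧
      ∀ x ∈ C, ∀ y ∈ C, ∀ z ∈ openSegment ℝ x y, z ∈ F → segment ℝ x y ⊆ F :=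
  stmt6_general b r s hadj
end

section
/- Let P ⊆ R^d be a polytope contained in the non-negative orthant, and let x be a point of P satisfying the quadrilateral constraints with respect to a partition of a subset of coordinates into triples (at most one coordinate in each triple is nonzero at x). Let F be the minimal face of P containing x and let u be any vertex of F. Then x dominates u (every coordinate that is zero at x is zero at u), and consequently u also satisfies the quadrilateral constraints. -/
/-!
The set of points of `P` whose support lies in the support of `x` is a face of `P`: in the
non-negative orthant a coordinate vanishes at an interior point of a segment only if it vanishes
at both endpoints. This face contains `x`, so it contains the minimal face `F`, and in particular
the vertex `u`.
-/

section Faces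

variable {ι : Type*}

def IsFace (P G : Set (ι → ℝ)) : Prop :=
  Convex ℝ G ∧ G ⊆ P ∧
    ∀ a ∈ P, ∀ b ∈ P, (∃ z ∈ openSegment ℝ a b, z ∈ G) → segment ℝ a b ⊆ G

theorem convex_setOf_forall_eq_zero_imp_eq_zero (x : ι → ℝ) :
    Convex ℝ {y : ι → ℝ | ∀ i, x i = 0 → y i = 0} := by
  intro a ha b hb s t _ _ _ i hxi
  simp [ha i hxi, hb i hxi]

theorem eq_zero_of_mem_openSegment_of_nonneg {a b z : ι → ℝ} {i : ι} (ha : 0 ≤ a i)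
    (hb : 0 ≤ b i) (hz : z ∈ openSegment ℝ a b) (hzi : z i = 0) : a i = 0 ∧ b i = 0 := by
  obtain ⟨s, t, hs, ht, -, rfl⟩ := hz
  simp only [Pi.add_apply, Pi.smul_apply, smul_eq_mul] at hzi
  constructor <;> nlinarith [mul_nonneg hs.le ha, mul_nonneg ht.le hb]

theorem isFace_inter_setOf_forall_eq_zero_imp_eq_zero {P : Set (ι → ℝ)} (hconv : Convex ℝ P)
    (horth : ∀ y ∈ P, ∀ i, 0 ≤ y i) (x : ι → ℝ) :
    IsFace P (P ∩ {y | ∀ i, x i = 0 → y i = 0}) := by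
  refine ⟨hconv.inter (convex_setOf_forall_eq_zero_imp_eq_zero x), Set.inter_subset_left, ?_⟩
  rintro a ha b hb ⟨z, hz, -, hzx⟩ w ⟨s, t, hs, ht, hst, rfl⟩
  refine ⟨hconv ha hb hs ht hst, fun i hxi => ?_⟩
  obtain ⟨hai, hbi⟩ :=
    eq_zero_of_mem_openSegment_of_nonneg (horth a ha i) (horth b hb i) hz (hzx i hxi)
  simp [hai, hbi]

end Faces

theorem quadrilateral_of_forall_eq_zero_imp_eq_zero {ι κ τ : Type*} {x u : ι → ℝ}
    {q : κ → τ → ι} (hdom : ∀ i, x i = 0 → u i = 0)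
    (hx : ∀ i j k, x (q i j) ≠ 0 → x (q i k) ≠ 0 → j = k) :
    ∀ i j k, u (q i j) ≠ 0 → u (q i k) ≠ 0 → j = k :=
  fun i j k hj hk => hx i j k (mt (hdom _) hj) (mt (hdom _) hk)

theorem stmt7 {d m : ℕ} (P : Set (Fin d → ℝ)) (hconv : Convex ℝ P)
    -- P lies in the non-negative orthant
    (horth : ∀ y ∈ P, ∀ i, 0 ≤ y i)
    -- the triples of coordinates for the quadrilateral constraints
    (q : Fin m → Fin 3 → Fin d)
    (x : Fin d → ℝ) (hx : x ∈ P)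
    -- x satisfies the quadrilateral constraints
    (hxQC : ∀ i j k, x (q i j) ≠ 0 → x (q i k) ≠ 0 → j = k)
    -- F is the minimal face of P containing x
    (F : Set (Fin d → ℝ))
    (hF : F = ⋂₀ {G | (Convex ℝ G ∧ G ⊆ P ∧
        ∀ a ∈ P, ∀ b ∈ P, (∃ z ∈ openSegment ℝ a b, z ∈ G) → segment ℝ a b ⊆ G)
      ∧ x ∈ G})
    -- u is a vertex of F
    (u : Fin d → ℝ) (hu : u ∈ Set.extremePoints ℝ F) :
    (∀ i, x i = 0 → u i = 0) ∧
      (∀ i j k, u (q i j) ≠ 0 → u (q i k) ≠ 0 → j = k) := by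
  have hFG : F ⊆ P ∩ {y | ∀ i, x i = 0 → y i = 0} := by
    rw [hF]
    exact Set.sInter_subset_of_mem
      ⟨isFace_inter_setOf_forall_eq_zero_imp_eq_zero hconv horth x, hx, fun _ => id⟩
  have hdom : ∀ i, x i = 0 → u i = 0 := (hFG hu.1).2
  exact ⟨hdom, quadrilateral_of_forall_eq_zero_imp_eq_zero hdom hxQC⟩
end

section
/- Let K ⊆ R^d be a pointed convex cone (admitting a linear functional strictly positive on K \ {0}) generated by non-negative combinations of a finite basis B, and let h be a linear functional. Partition B into S_0 = {b : h(b) = 0}, S_+ = {b : h(b) > 0}, S_- = {b : h(b) < 0}. Then every element of K ∩ {x : h(x) ≥ 0} is a non-negative linear combination of vectors in S_0 ∪ S_+ ∪ { h(u)·w − h(w)·u : u ∈ S_+, w ∈ S_- }. -/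
open PointedCone Set

section CommRing

variable {R E : Type*} [CommRing R] [AddCommGroup E] [Module R E] (h : E →ₗ[R] R)

def crossCombination : E →ₗ[R] E →ₗ[R] E :=
  LinearMap.mk₂ R (fun u w => h u • w - h w • u)
    (by intros; simp only [map_add]; module) (by intros; simp only [map_smul, smul_eq_mul]; module)
    (by intros; simp only [map_add]; module) (by intros; simp only [map_smul, smul_eq_mul]; module)

lemma crossCombination_apply (u w : E) : crossCombination h u w = h u • w - h w • u := rfl

end CommRing

section FourierMotzkin

variable {𝕜 E ι : Type*} [Field 𝕜] [LinearOrder 𝕜] [IsStrictOrderedRing 𝕜]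
  [AddCommGroup E] [Module 𝕜 E] (h : E →ₗ[𝕜] 𝕜)

lemma crossCombination_mem_of_mem_hull {s t : Set E} {C : PointedCone 𝕜 E}
    (hst : ∀ u ∈ s, ∀ w ∈ t, crossCombination h u w ∈ C) {u w : E} (hu : u ∈ hull 𝕜 s)
    (hw : w ∈ hull 𝕜 t) : crossCombination h u w ∈ C := by
  have := Submodule.apply_mem_map₂
    ((crossCombination h).restrictScalars₁₂ {c : 𝕜 // 0 ≤ c} {c : 𝕜 // 0 ≤ c}) hu hw
  rw [Submodule.map₂_span_span] at this
  refine Submodule.span_le.mpr ?_ this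
  rintro _ ⟨u, hu, w, hw, rfl⟩
  exact hst u hu w hw

lemma nonneg_of_mem_hull {s : Set E} (hs : ∀ v ∈ s, 0 ≤ h v) {u : E} (hu : u ∈ hull 𝕜 s) :
    0 ≤ h u :=
  (Submodule.span_le (p := comap h (positive 𝕜 𝕜))).mpr hs hu

lemma eq_zero_of_mem_hull_of_neg {t : Set E} (ht : ∀ v ∈ t, h v < 0) {w : E}
    (hw : w ∈ hull 𝕜 t) (hhw : 0 ≤ h w) : w = 0 := by
  suffices ∀ w ∈ hull 𝕜 t, h w ≤ 0 ∧ (0 ≤ h w → w = 0) from (this w hw).2 hhw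
  intro w hw
  induction hw using Submodule.span_induction with
  | mem v hv => exact ⟨(ht v hv).le, fun hv' => absurd hv' (ht v hv).not_ge⟩
  | zero => simp
  | add x y _ _ hx hy =>
    refine ⟨by simpa using add_nonpos hx.1 hy.1, fun hxy => ?_⟩
    rw [map_add] at hxy
    rw [hx.2 (by linarith [hy.1]), hy.2 (by linarith [hx.1]), add_zero]
  | smul a x _ hx =>
    obtain ⟨a, ha⟩ := a
    simp only [Nonneg.mk_smul, map_smul, smul_eq_mul] at hx ⊢
    refine ⟨mul_nonpos_of_nonneg_of_nonpos ha hx.1, fun hax => ?_⟩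
    rcases ha.eq_or_lt with rfl | hapos
    · exact zero_smul _ _
    · rw [hx.2 (nonneg_of_mul_nonneg_right hax hapos), smul_zero]

def fourierMotzkinGenerators (b : ι → E) : Set E :=
  {v | ∃ i, 0 ≤ h (b i) ∧ v = b i} ∪
    {v | ∃ i j, 0 < h (b i) ∧ h (b j) < 0 ∧ v = h (b i) • b j - h (b j) • b i}

variable (b : ι → E)

lemma hull_range_le_sup :
    hull 𝕜 (range b) ≤ hull 𝕜 (b '' {i | 0 ≤ h (b i)}) ⊔ hull 𝕜 (b '' {i | h (b i) < 0}) := by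
  rw [← Submodule.span_union]
  refine Submodule.span_mono ?_
  rintro _ ⟨i, rfl⟩
  rcases le_or_gt 0 (h (b i)) with hi | hi
  exacts [Or.inl ⟨i, hi, rfl⟩, Or.inr ⟨i, hi, rfl⟩]

lemma hull_nonneg_le_hull_fourierMotzkinGenerators :
    hull 𝕜 (b '' {i | 0 ≤ h (b i)}) ≤ hull 𝕜 (fourierMotzkinGenerators h b) := by
  refine Submodule.span_mono ?_
  rintro _ ⟨i, hi, rfl⟩
  exact Or.inl ⟨i, hi, rfl⟩

lemma crossCombination_mem_hull_fourierMotzkinGenerators {u w : E}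
    (hu : u ∈ hull 𝕜 (b '' {i | 0 ≤ h (b i)})) (hw : w ∈ hull 𝕜 (b '' {i | h (b i) < 0})) :
    crossCombination h u w ∈ hull 𝕜 (fourierMotzkinGenerators h b) := by
  refine crossCombination_mem_of_mem_hull h ?_ hu hw
  rintro _ ⟨i, hi, rfl⟩ _ ⟨j, hj, rfl⟩
  rcases hi.eq_or_lt with hi | hi
  · rw [crossCombination_apply, ← hi, zero_smul, zero_sub, ← neg_smul]
    exact smul_mem _ (neg_nonneg.mpr hj.le) (subset_hull (Or.inl ⟨i, hi.le, rfl⟩))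
  · exact subset_hull (Or.inr ⟨i, j, hi, hj, rfl⟩)

theorem mem_hull_fourierMotzkinGenerators {x : E} (hx : x ∈ hull 𝕜 (range b)) (hhx : 0 ≤ h x) :
    x ∈ hull 𝕜 (fourierMotzkinGenerators h b) := by
  obtain ⟨u, hu, w, hw, rfl⟩ := Submodule.mem_sup.mp (hull_range_le_sup h b hx)
  have hnn := hull_nonneg_le_hull_fourierMotzkinGenerators h b
  rcases (nonneg_of_mem_hull h (by rintro _ ⟨i, hi, rfl⟩; exact hi) hu).eq_or_lt with hu0 | hupos
  · obtain rfl : w = 0 := eq_zero_of_mem_hull_of_neg h (by rintro _ ⟨i, hi, rfl⟩; exact hi) hw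
      (by simpa [← hu0] using hhx)
    simpa using hnn hu
  · have hdecomp : u + w = (h u)⁻¹ • crossCombination h u w + (h (u + w) / h u) • u := by
      rw [crossCombination_apply, map_add, smul_sub, smul_smul, smul_smul,
        inv_mul_cancel₀ hupos.ne', add_div, div_self hupos.ne']
      module
    rw [hdecomp]
    exact add_mem (smul_mem _ (inv_nonneg.mpr hupos.le)
      (crossCombination_mem_hull_fourierMotzkinGenerators h b hu hw))
      (smul_mem _ (div_nonneg hhx hupos.le) (hnn hu))

end FourierMotzkin

lemma IsNonnegCombo.of_mem_hull {d : ℕ} {B : Set (Fin d → ℝ)} {x : Fin d → ℝ}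
    (hx : x ∈ hull ℝ B) : IsNonnegCombo B x := by
  obtain ⟨c, hcB, hc, rfl⟩ := mem_hull_set.mp hx
  exact ⟨c.support, c, hcB, fun v _ => hc v, rfl⟩

theorem stmt11_general {d k : ℕ} (b : Fin k → (Fin d → ℝ)) (h : (Fin d → ℝ) →ₗ[ℝ] ℝ)
    (K : Set (Fin d → ℝ))
    (hK : K = {x | ∃ c : Fin k → ℝ, (∀ i, 0 ≤ c i) ∧ x = ∑ i, c i • b i})
    (x : Fin d → ℝ) (hx : x ∈ K) (hhx : 0 ≤ h x) :
    IsNonnegCombo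
      ({v | ∃ i, 0 ≤ h (b i) ∧ v = b i} ∪
        {v | ∃ i j, 0 < h (b i) ∧ h (b j) < 0 ∧ v = h (b i) • b j - h (b j) • b i})
      x := by
  subst hK
  obtain ⟨c, hc, rfl⟩ := hx
  refine IsNonnegCombo.of_mem_hull (mem_hull_fourierMotzkinGenerators h b ?_ hhx)
  exact sum_mem fun i _ => smul_mem _ (hc i) (subset_hull (mem_range_self i))

theorem stmt11 {d k : ℕ} (b : Fin k → (Fin d → ℝ)) (h : (Fin d → ℝ) →ₗ[ℝ] ℝ)
    (K : Set (Fin d → ℝ))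
    (hK : K = {x | ∃ c : Fin k → ℝ, (∀ i, 0 ≤ c i) ∧ x = ∑ i, c i • b i})
    -- K is pointed
    (hpointed : ∃ g : (Fin d → ℝ) →ₗ[ℝ] ℝ, ∀ x ∈ K, x ≠ 0 → 0 < g x)
    (x : Fin d → ℝ) (hx : x ∈ K) (hhx : 0 ≤ h x) :
    IsNonnegCombo
      ({v | ∃ i, 0 ≤ h (b i) ∧ v = b i} ∪
        {v | ∃ i j, 0 < h (b i) ∧ h (b j) < 0 ∧ v = h (b i) • b j - h (b j) • b i})
      x :=
  stmt11_general b h K hK x hx hhx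
end

section
/- Let C be a pointed finitely generated convex cone in R^d with basis B = {b_1,...,b_k}. If two distinct basis vectors b_r, b_s are such that there exist x, y ∈ C and a point z on the open segment (x,y) with z = μ b_r + η b_s for some μ, η ≥ 0, but the closed segment [x,y] is not contained in the plane spanned by b_r and b_s, then there is a representation μ' b_r + η' b_s = sum_i λ_i b_i with all coefficients non-negative and λ_i > 0 for some i ≠ r, s. -/
/-!
Write `x = ∑ cᵢ bᵢ` and `y = ∑ eᵢ bᵢ` with `c, e ≥ 0`. Since `λ ↦ ∑ λᵢ bᵢ` is linear, the point
`z` of the open segment `(x, y)` is `∑ λᵢ bᵢ` for some `λ` in the open segment `(c, e)`, which is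
a non-negative representation of `μ b_r + η b_s`. If `λ` vanished off `{r, s}`, then so would `c`
and `e`, as an interior point of a segment of non-negative reals is zero only when both ends are;
but then `x` and `y`, hence the whole segment `[x, y]`, would lie in the span of `b_r` and `b_s`.
-/

lemma mem_openSegment_apply {𝕜 ι : Type*} {β : ι → Type*} [Ring 𝕜] [PartialOrder 𝕜]
    [IsOrderedRing 𝕜] [∀ i, AddCommGroup (β i)] [∀ i, Module 𝕜 (β i)] {f g h : ∀ i, β i}
    (hh : h ∈ openSegment 𝕜 f g) (i : ι) : h i ∈ openSegment 𝕜 (f i) (g i) :=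
  image_openSegment 𝕜 (LinearMap.proj (R := 𝕜) (φ := β) i).toAffineMap f g ▸ ⟨h, hh, rfl⟩

lemma eq_zero_and_eq_zero_of_zero_mem_openSegment {𝕜 : Type*} [Field 𝕜] [LinearOrder 𝕜]
    [IsStrictOrderedRing 𝕜] {a b : 𝕜} (ha : 0 ≤ a) (hb : 0 ≤ b)
    (h : (0 : 𝕜) ∈ openSegment 𝕜 a b) : a = 0 ∧ b = 0 := by
  obtain ⟨θ, θ', hθ, hθ', -, hsum⟩ := h
  obtain ⟨hθa, hθb⟩ :=
    (add_eq_zero_iff_of_nonneg (mul_nonneg hθ.le ha) (mul_nonneg hθ'.le hb)).1 hsum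
  exact ⟨(mul_eq_zero.1 hθa).resolve_left hθ.ne', (mul_eq_zero.1 hθb).resolve_left hθ'.ne'⟩

lemma sum_smul_mem_span_pair {ι R M : Type*} [Fintype ι] [Semiring R] [AddCommMonoid M]
    [Module R M] {b : ι → M} {f : ι → R} {r s : ι} (hf : ∀ i, i ≠ r → i ≠ s → f i = 0) :
    ∑ i, f i • b i ∈ Submodule.span R {b r, b s} := by
  refine Submodule.sum_mem _ fun i _ => ?_
  by_cases hir : i = r
  · exact Submodule.smul_mem _ _ (Submodule.subset_span (by simp [hir]))
  by_cases his : i = s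
  · exact Submodule.smul_mem _ _ (Submodule.subset_span (by simp [his]))
  · simp [hf i hir his]

theorem stmt17_general {d k : ℕ} (b : Fin k → (Fin d → ℝ))
    (C : Set (Fin d → ℝ))
    (hC : C = {x | ∃ c : Fin k → ℝ, (∀ i, 0 ≤ c i) ∧ x = ∑ i, c i • b i})
    (r s : Fin k)
    (x y : Fin d → ℝ) (hx : x ∈ C) (hy : y ∈ C)
    (z : Fin d → ℝ) (hz : z ∈ openSegment ℝ x y)
    (μ η : ℝ) (hμ : 0 ≤ μ) (hη : 0 ≤ η) (hzrep : z = μ • b r + η • b s)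
    (hnotin : ¬ (segment ℝ x y ⊆ (Submodule.span ℝ {b r, b s} : Set (Fin d → ℝ)))) :
    ∃ (μ' η' : ℝ) (lam : Fin k → ℝ), 0 ≤ μ' ∧ 0 ≤ η' ∧ (∀ i, 0 ≤ lam i) ∧
      μ' • b r + η' • b s = ∑ i, lam i • b i ∧
      ∃ i, i ≠ r ∧ i ≠ s ∧ 0 < lam i := by
  subst hC
  obtain ⟨c, hc, rfl⟩ := hx
  obtain ⟨e, he, rfl⟩ := hy
  obtain ⟨lam, hlam, rfl⟩ : ∃ lam ∈ openSegment ℝ c e, ∑ i, lam i • b i = z := by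
    simp_rw [← Fintype.linearCombination_apply ℝ] at hz ⊢
    exact (image_openSegment ℝ (Fintype.linearCombination ℝ b).toAffineMap c e).symm.subset hz
  have hlam_nonneg : ∀ i, 0 ≤ lam i := fun i =>
    (convex_Ici 0).openSegment_subset (hc i) (he i) (mem_openSegment_apply hlam i)
  refine ⟨μ, η, lam, hμ, hη, hlam_nonneg, hzrep.symm, ?_⟩
  by_contra! hsupp
  have hce : ∀ i, i ≠ r → i ≠ s → c i = 0 ∧ e i = 0 := fun i hir his =>
    eq_zero_and_eq_zero_of_zero_mem_openSegment (hc i) (he i)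
      ((hsupp i hir his).antisymm (hlam_nonneg i) ▸ mem_openSegment_apply hlam i)
  exact hnotin <| (Submodule.convex _).segment_subset
    (sum_smul_mem_span_pair fun i hir his => (hce i hir his).1)
    (sum_smul_mem_span_pair fun i hir his => (hce i hir his).2)

theorem stmt17 {d k : ℕ} (b : Fin k → (Fin d → ℝ))
    (hindep : ∀ r : Fin k, ¬ ∃ c : Fin k → ℝ,
      (∀ i, 0 ≤ c i) ∧ c r = 0 ∧ b r = ∑ i, c i • b i)
    (hpos : ∃ h : (Fin d → ℝ) →ₗ[ℝ] ℝ, ∀ i, 0 < h (b i))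
    (C : Set (Fin d → ℝ))
    (hC : C = {x | ∃ c : Fin k → ℝ, (∀ i, 0 ≤ c i) ∧ x = ∑ i, c i • b i})
    (r s : Fin k) (hrs : r ≠ s)
    (x y : Fin d → ℝ) (hx : x ∈ C) (hy : y ∈ C)
    (z : Fin d → ℝ) (hz : z ∈ openSegment ℝ x y)
    (μ η : ℝ) (hμ : 0 ≤ μ) (hη : 0 ≤ η) (hzrep : z = μ • b r + η • b s)
    (hnotin : ¬ (segment ℝ x y ⊆ (Submodule.span ℝ {b r, b s} : Set (Fin d → ℝ)))) :
    ∃ (μ' η' : ℝ) (lam : Fin k → ℝ), 0 ≤ μ' ∧ 0 ≤ η' ∧ (∀ i, 0 ≤ lam i) ∧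
      μ' • b r + η' • b s = ∑ i, lam i • b i ∧
      ∃ i, i ≠ r ∧ i ≠ s ∧ 0 < lam i :=
  stmt17_general b C hC r s x y hx hy z hz μ η hμ hη hzrep hnotin
end
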